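/- For any nonempty subset X of the real line ℝ, the Gromov–Hausdorff distance between X and ℝ equals the Hausdorff distance between X and ℝ: d_GH(X, ℝ) = d_H(X, ℝ). -/

import Mathlib

open ENNReal

/-- A correspondence between `X` and `Y`: a relation whose projections are surjective. -/
def IsCorrespondence {X Y : Type*} (R : Set (X × Y)) : Prop :=
  (∀ x : X, ∃ y : Y, (x, y) ∈ R) ∧ (∀ y : Y, ∃ x : X, (x, y) ∈ R)

/-- The distortion of a relation between two (pseudo)metric spaces, valued in `ℝ≥0∞`. -/
noncomputable def relDis {X Y : Type*} [PseudoMetricSpace X] [PseudoMetricSpace Y]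
    (R : Set (X × Y)) : ℝ≥0∞ :=
  ⨆ p ∈ R, ⨆ q ∈ R, ENNReal.ofReal |dist p.1 q.1 - dist p.2 q.2|

/-- The Gromov–Hausdorff distance between two (pseudo)metric spaces, defined (via the
standard characterization `2 d_GH = inf dis R`) as half the infimum of distortions of
correspondences. -/
noncomputable def ghDist (X Y : Type*) [PseudoMetricSpace X] [PseudoMetricSpace Y] : ℝ≥0∞ :=
  (⨅ R ∈ {R : Set (X × Y) | IsCorrespondence R}, relDis R) / 2

/-! The correspondence `{(x, r) : |x - r| < d_H + ε}` has distortion at most `2 (d_H + ε)`, so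
`d_GH ≤ d_H`. Conversely, a correspondence of distortion `D` contains the graph of a map
`g : ℝ → X` with `| |g s - g t| - |s - t| | ≤ D`. Such a map is unbounded in both directions, and
since `ℝ` is connected it has `ε`-close points whose images lie on either side of any level `y`;
those images are at most `D + ε` apart, so one of them is within `D / 2 + ε` of `y`. Hence
`2 d_H ≤ D`. -/

open Metric Set

section Distortion

variable {X Y : Type*} [PseudoMetricSpace X] [PseudoMetricSpace Y]

theorem relDis_le_iff {R : Set (X × Y)} {D : ℝ≥0∞} :
    relDis R ≤ D ↔ ∀ p ∈ R, ∀ q ∈ R, ENNReal.ofReal |dist p.1 q.1 - dist p.2 q.2| ≤ D := by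
  simp only [relDis, iSup₂_le_iff]

theorem ghDist_le_relDis_div_two {R : Set (X × Y)} (hR : IsCorrespondence R) :
    ghDist X Y ≤ relDis R / 2 :=
  ENNReal.div_le_div_right (iInf₂_le R hR) 2

theorem le_ghDist_of_forall {a : ℝ≥0∞}
    (h : ∀ R : Set (X × Y), IsCorrespondence R → 2 * a ≤ relDis R) : a ≤ ghDist X Y := by
  rw [ghDist, ENNReal.le_div_iff_mul_le (Or.inl two_ne_zero) (Or.inl ofNat_ne_top), mul_comm]
  exact le_iInf₂ h

end Distortion

theorem ghDist_subtype_le_hausdorffEDist {Y : Type*} [PseudoMetricSpace Y] (s : Set Y) :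
    ghDist s Y ≤ hausdorffEDist s univ := by
  refine ENNReal.le_of_forall_pos_le_add fun ε hε hH => ?_
  set r := hausdorffEDist s univ + ε
  have hr : hausdorffEDist s univ < r := ENNReal.lt_add_right hH.ne (by exact_mod_cast hε.ne')
  let R : Set (s × Y) := {p | edist (p.1 : Y) p.2 < r}
  have hR : IsCorrespondence R := by
    refine ⟨fun x => ⟨x, by simpa [R] using pos_of_gt hr⟩, fun y => ?_⟩
    have hy : infEDist y s < r := by
      rw [hausdorffEDist_comm] at hr
      exact (infEDist_le_hausdorffEDist_of_mem (mem_univ y)).trans_lt hr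
    obtain ⟨x, hx, hxy⟩ := infEDist_lt_iff.mp hy
    exact ⟨⟨x, hx⟩, by simpa [R, edist_comm] using hxy⟩
  have hdis : relDis R ≤ r * 2 := by
    refine relDis_le_iff.mpr fun p hp q hq => ?_
    calc ENNReal.ofReal |dist p.1 q.1 - dist p.2 q.2|
        ≤ edist (p.1 : Y) p.2 + edist (q.1 : Y) q.2 := by
          rw [edist_dist, edist_dist, ← ENNReal.ofReal_add dist_nonneg dist_nonneg]
          exact ENNReal.ofReal_le_ofReal
            (by simpa [Subtype.dist_eq, Real.dist_eq] using dist_dist_dist_le (p.1 : Y) q.1 p.2 q.2)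
      _ ≤ r + r := add_le_add hp.le hq.le
      _ = r * 2 := (mul_two r).symm
  calc ghDist s Y ≤ relDis R / 2 := ghDist_le_relDis_div_two hR
    _ ≤ r * 2 / 2 := by gcongr
    _ = r := ENNReal.mul_div_cancel_right two_ne_zero ofNat_ne_top

section RoughIsometry

variable {g : ℝ → ℝ} {D : ℝ}

theorem exists_le_apply_of_abs_dist_sub_le (hg : ∀ s t, |dist (g s) (g t) - dist s t| ≤ D)
    (c : ℝ) : ∃ b, c ≤ g b := by
  have hD : 0 ≤ D := by simpa using hg 0 0
  -- `g T` and `g (-T)` are `2T - D` apart but both within `T + D` of `g 0`.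
  set T := |c - g 0| + 2 * D
  have hT : 0 ≤ T := by positivity
  have h1 := (abs_le.mp (hg T (-T))).1
  have h2 := (abs_le.mp (hg T 0)).2
  have h3 := (abs_le.mp (hg (-T) 0)).2
  simp only [Real.dist_eq, sub_neg_eq_add, sub_zero, abs_neg, abs_of_nonneg hT,
    abs_of_nonneg (add_nonneg hT hT)] at h1 h2 h3
  have hc := le_abs_self (c - g 0)
  rcases le_total (g (-T)) (g T) with h | h
  · rw [abs_of_nonneg (sub_nonneg.2 h)] at h1
    exact ⟨T, by linarith [neg_abs_le (g (-T) - g 0)]⟩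
  · rw [abs_of_nonpos (sub_nonpos.2 h)] at h1
    exact ⟨-T, by linarith [neg_abs_le (g T - g 0)]⟩

theorem exists_abs_sub_lt_of_abs_dist_sub_le (hg : ∀ s t, |dist (g s) (g t) - dist s t| ≤ D)
    (y : ℝ) {ε : ℝ} (hε : 0 < ε) : ∃ s, |g s - y| < D / 2 + ε := by
  by_contra! hfar
  obtain ⟨a, ha⟩ := exists_le_apply_of_abs_dist_sub_le (g := fun s => -g s)
    (by simpa only [dist_neg_neg] using hg) (1 - y)
  obtain ⟨b, hb⟩ := exists_le_apply_of_abs_dist_sub_le hg y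
  -- Connectedness of `ℝ`: the frontier of `{s | g s < y}` is nonempty.
  obtain ⟨z, hz⟩ := (nonempty_frontier_iff (s := {s | g s < y})).mpr
    ⟨⟨a, show g a < y by linarith⟩, (ne_univ_iff_exists_notMem _).mpr ⟨b, hb.not_gt⟩⟩
  rw [frontier_eq_closure_inter_closure] at hz
  obtain ⟨s, hs, hzs⟩ := Metric.mem_closure_iff.mp hz.1 (ε / 2) (half_pos hε)
  obtain ⟨t, ht, hzt⟩ := Metric.mem_closure_iff.mp hz.2 (ε / 2) (half_pos hε)
  simp only [mem_compl_iff, mem_ofPred_eq, not_lt] at hs ht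
  have hfar_s := hfar s
  have hfar_t := hfar t
  rw [abs_of_neg (sub_neg.2 hs)] at hfar_s
  rw [abs_of_nonneg (sub_nonneg.2 ht)] at hfar_t
  have hst : dist t s < ε := by linarith [dist_triangle_left t s z]
  have hgap := (abs_le.mp (hg t s)).2
  rw [Real.dist_eq (g t), abs_of_nonneg (by linarith)] at hgap
  linarith

theorem infEDist_range_le_of_abs_dist_sub_le (hg : ∀ s t, |dist (g s) (g t) - dist s t| ≤ D)
    (y : ℝ) : infEDist y (range g) ≤ ENNReal.ofReal (D / 2) := by
  refine ENNReal.le_of_forall_pos_le_add fun ε hε _ => ?_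
  obtain ⟨s, hs⟩ := exists_abs_sub_lt_of_abs_dist_sub_le hg y (NNReal.coe_pos.mpr hε)
  calc infEDist y (range g) ≤ edist y (g s) := infEDist_le_edist_of_mem (mem_range_self s)
    _ ≤ ENNReal.ofReal (D / 2 + ε) := by
        rw [edist_dist, Real.dist_eq, abs_sub_comm]
        exact ENNReal.ofReal_le_ofReal hs.le
    _ ≤ ENNReal.ofReal (D / 2) + ε :=
        ENNReal.ofReal_add_le.trans_eq (by rw [ENNReal.ofReal_coe_nnreal])

end RoughIsometry

theorem two_mul_hausdorffEDist_univ_le_relDis {X : Set ℝ} {R : Set (X × ℝ)}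
    (hR : IsCorrespondence R) : 2 * hausdorffEDist X univ ≤ relDis R := by
  obtain htop | htop := eq_or_ne (relDis R) ⊤
  · simp [htop]
  set D := (relDis R).toReal
  have hD : relDis R = ENNReal.ofReal D := (ENNReal.ofReal_toReal htop).symm
  choose f hf using hR.2
  have hg : ∀ s t, |dist (f s : ℝ) (f t) - dist s t| ≤ D := fun s t =>
    (ENNReal.ofReal_le_ofReal_iff ENNReal.toReal_nonneg).mp
      (hD ▸ relDis_le_iff.mp le_rfl _ (hf s) _ (hf t))
  have hX : hausdorffEDist X univ ≤ ENNReal.ofReal (D / 2) := by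
    refine hausdorffEDist_le_of_infEDist
      (fun x _ => by simp [infEDist_zero_of_mem (mem_univ x)]) fun y _ => ?_
    calc infEDist y X ≤ infEDist y (range fun s => (f s : ℝ)) :=
          infEDist_anti (range_subset_iff.mpr fun s => (f s).2)
      _ ≤ ENNReal.ofReal (D / 2) := infEDist_range_le_of_abs_dist_sub_le hg y
  calc 2 * hausdorffEDist X univ ≤ 2 * ENNReal.ofReal (D / 2) := by gcongr
    _ = relDis R := by
        rw [hD, ← ENNReal.ofReal_ofNat 2, ← ENNReal.ofReal_mul zero_le_two]
        ring_nf

theorem stmt_12_general (X : Set ℝ) :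
    ghDist ↥X ℝ = EMetric.hausdorffEdist X (Set.univ : Set ℝ) :=
  le_antisymm (ghDist_subtype_le_hausdorffEDist X)
    (le_ghDist_of_forall fun _ => two_mul_hausdorffEDist_univ_le_relDis)

/-- For any nonempty subset `X` of the real line, the Gromov–Hausdorff distance between
`X` and `ℝ` equals the Hausdorff distance between `X` and `ℝ`. -/
theorem stmt_12 (X : Set ℝ) (hX : X.Nonempty) :
    ghDist ↥X ℝ = EMetric.hausdorffEdist X (Set.univ : Set ℝ) :=
  stmt_12_general X
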